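/- arXiv:0903.4969 — 2 statements merged into one kernel-verified Lean document; each statement's English description precedes it below -/
import Mathlib

section
/- Let n ≥ 2. In the polynomial ring 𝔽₂[t₁,…,tₙ] the following factorization holds: ∏_{1≤j<k≤n} (1 + t_j + t_k) = (∏_{1≤j<k≤n−1} (1 + t_j + t_k)) · ( Σ_{k=0}^{n−1} tₙ^k · Σ_{l=0}^{n−1−k} C(n−1−l, k) · ē_l ), where ē_l denotes the l-th elementary symmetric polynomial in t₁,…,t_{n−1} (with ē₀ = 1) and C(·,·) is the binomial coefficient reduced mod 2. Equivalently, ∏_{i=1}^{n−1} (1 + t_i + tₙ) = Σ_{k=0}^{n−1} tₙ^k Σ_{l=0}^{n−1−k} C(n−1−l, k) ē_l in 𝔽₂[t₁,…,tₙ]. -/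
open MvPolynomial Finset

/-- The sum `Σ_{k=0}^{n} tₙ₊₁^k Σ_{l=0}^{n−k} C(n−l, k)·ē_l` appearing in the
inductive step, where `ē_l` is the `l`-th elementary symmetric polynomial in the
first `n` variables and the binomial coefficient is reduced mod 2. -/
noncomputable def inductiveSum (n : ℕ) : MvPolynomial (Fin (n + 1)) (ZMod 2) :=
  ∑ k ∈ Finset.range (n + 1), (X (Fin.last n)) ^ k *
    ∑ l ∈ Finset.range (n - k + 1),
      (Nat.choose (n - l) k : MvPolynomial (Fin (n + 1)) (ZMod 2)) *
        rename Fin.castSucc (esymm (Fin n) (ZMod 2) l)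

/-!
Pairs `j < k ≤ n + 1` split into those with `k ≤ n` and those with `k = n + 1`, so everything
reduces to the last factor `∏ᵢ ((1 + tₙ₊₁) + tᵢ)`. By Vieta this is `Σⱼ ēⱼ (1 + tₙ₊₁)^(n-j)`,
and expanding `(1 + tₙ₊₁)^(n-j)` binomially and collecting powers of `tₙ₊₁` gives the double sum.
-/

theorem Fin.prod_filter_fst_lt_snd_succ {M : Type*} [CommMonoid M] (n : ℕ)
    (g : Fin (n + 1) → Fin (n + 1) → M) :
    ∏ p ∈ univ.filter (fun p : Fin (n + 1) × Fin (n + 1) => p.1 < p.2), g p.1 p.2 =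
      (∏ p ∈ univ.filter (fun p : Fin n × Fin n => p.1 < p.2), g p.1.castSucc p.2.castSucc) *
        ∏ i : Fin n, g i.castSucc (Fin.last n) := by
  have last_not_lt (i : Fin n) : ¬ Fin.last n < i.castSucc := (Fin.castSucc_lt_last i).asymm
  simp only [prod_filter, Fintype.prod_prod_type, Fin.prod_univ_castSucc,
    Fin.castSucc_lt_castSucc_iff, Fin.castSucc_lt_last, last_not_lt, lt_irrefl, if_true,
    if_false, prod_const_one, mul_one, prod_mul_distrib]

theorem MvPolynomial.prod_add_map_X_eq_sum_map_esymm {σ R S : Type*} [CommSemiring R]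
    [CommSemiring S] [Fintype σ] (f : MvPolynomial σ R →+* S) (y : S) :
    ∏ i : σ, (y + f (X i)) =
      ∑ j ∈ range (Fintype.card σ + 1), f (esymm σ R j) * y ^ (Fintype.card σ - j) := by
  simpa [Polynomial.eval₂_finsetProd, Polynomial.eval₂_finsetSum] using
    congrArg (Polynomial.eval₂ f y) (prod_C_add_X_eq_sum_esymm R σ)

theorem one_add_pow_eq_sum_range_of_le {R : Type*} [CommSemiring R] (t : R) {m N : ℕ}
    (h : m ≤ N) : (1 + t) ^ m = ∑ k ∈ range (N + 1), (m.choose k : R) * t ^ k := by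
  rw [add_comm, add_pow]
  refine (sum_subset (range_subset_range.2 (Nat.succ_le_succ h)) fun k _ hk => ?_).trans ?_
  · rw [Nat.choose_eq_zero_of_lt (by simpa using hk)]; simp
  · exact sum_congr rfl fun k _ => by ring

theorem sum_mul_one_add_pow_sub_eq_sum_pow_mul {R : Type*} [CommSemiring R] (e : ℕ → R) (t : R)
    (n : ℕ) :
    ∑ j ∈ range (n + 1), e j * (1 + t) ^ (n - j) =
      ∑ k ∈ range (n + 1), t ^ k * ∑ l ∈ range (n - k + 1), ((n - l).choose k : R) * e l := by
  calc ∑ j ∈ range (n + 1), e j * (1 + t) ^ (n - j)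
      = ∑ j ∈ range (n + 1), ∑ k ∈ range (n + 1), t ^ k * (((n - j).choose k : R) * e j) := by
        refine sum_congr rfl fun j _ => ?_
        rw [one_add_pow_eq_sum_range_of_le t (Nat.sub_le n j), mul_sum]
        exact sum_congr rfl fun k _ => by ring
    _ = ∑ k ∈ range (n + 1), t ^ k * ∑ l ∈ range (n + 1), ((n - l).choose k : R) * e l := by
        rw [sum_comm]
        simp only [mul_sum]
    _ = _ := by
        refine sum_congr rfl fun k hk => congrArg _ ?_
        refine (sum_subset (range_subset_range.2 (by omega)) fun l hl hl' => ?_).symm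
        rw [Nat.choose_eq_zero_of_lt (by simp only [mem_range] at hl hl' hk; omega)]; simp

theorem prod_one_add_X_add_X_last_eq_inductiveSum (n : ℕ) :
    ∏ i : Fin n, (1 + X i.castSucc + X (Fin.last n) : MvPolynomial (Fin (n + 1)) (ZMod 2)) =
      inductiveSum n := by
  have vieta := prod_add_map_X_eq_sum_map_esymm
    (rename (R := ZMod 2) (Fin.castSucc : Fin n → Fin (n + 1))).toRingHom (1 + X (Fin.last n))
  rw [Fintype.card_fin] at vieta
  calc _ = ∏ i : Fin n, (1 + X (Fin.last n) + rename Fin.castSucc (X i)) :=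
        prod_congr rfl fun i _ => by rw [rename_X]; ring
    _ = _ := vieta
    _ = inductiveSum n := sum_mul_one_add_pow_sub_eq_sum_pow_mul _ _ n

theorem product_inductive_step_general (n : ℕ) :
    ((∏ p ∈ univ.filter (fun p : Fin (n + 1) × Fin (n + 1) => p.1 < p.2),
        (1 + X p.1 + X p.2) : MvPolynomial (Fin (n + 1)) (ZMod 2)) =
      (∏ p ∈ univ.filter (fun p : Fin n × Fin n => p.1 < p.2),
        (1 + X p.1.castSucc + X p.2.castSucc)) * inductiveSum n) ∧
    ((∏ i : Fin n, (1 + X i.castSucc + X (Fin.last n)) :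
        MvPolynomial (Fin (n + 1)) (ZMod 2)) = inductiveSum n) := by
  have last_factor := prod_one_add_X_add_X_last_eq_inductiveSum n
  refine ⟨?_, last_factor⟩
  rw [Fin.prod_filter_fst_lt_snd_succ n fun a b => 1 + X a + X b, last_factor]

/-- for a total number of variables `n + 1 ≥ 2`, the product
`∏_{1≤j<k≤n+1} (1 + t_j + t_k)` factors as the corresponding product over the
first `n` variables times `Σ_k tₙ₊₁^k Σ_l C(n−l,k) ē_l`; equivalently,
`∏_{i=1}^{n} (1 + t_i + tₙ₊₁)` equals this sum. -/
theorem product_inductive_step (n : ℕ) (hn : 1 ≤ n) :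
    ((∏ p ∈ univ.filter (fun p : Fin (n + 1) × Fin (n + 1) => p.1 < p.2),
        (1 + X p.1 + X p.2) : MvPolynomial (Fin (n + 1)) (ZMod 2)) =
      (∏ p ∈ univ.filter (fun p : Fin n × Fin n => p.1 < p.2),
        (1 + X p.1.castSucc + X p.2.castSucc)) * inductiveSum n) ∧
    ((∏ i : Fin n, (1 + X i.castSucc + X (Fin.last n)) :
        MvPolynomial (Fin (n + 1)) (ZMod 2)) = inductiveSum n) :=
  product_inductive_step_general n
end

section
/- In 𝔽₂[t₁,…,t₉], the product ∏_{1≤j<k≤9} (1 + t_j + t_k) is congruent to (1 + e₄ + e₆ + e₇ + e₈)·(1 + e₄ + e₆ + e₇)⁴ modulo the ideal generated by e₁, e₂, e₃, e₅, e₉. -/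
open MvPolynomial Finset

/-- The `i`-th elementary symmetric polynomial in `𝔽₂[t₁,…,t₉]`. -/
noncomputable def e (i : ℕ) : MvPolynomial (Fin 9) (ZMod 2) :=
  esymm (Fin 9) (ZMod 2) i

/-!
The difference `P` of the two sides is symmetric, so `P = G(e₁,…,e₉)`, and `P` lies in
`(e₁,e₂,e₃,e₅,e₉)` once `G` vanishes identically after setting its 1st, 2nd, 3rd, 5th and 9th
variables to zero. Over an algebraically closed field of characteristic 2 every value of
`(e₄,e₆,e₇,e₈) = (a,b,c,d)` is attained at the roots of `x·g(x)`, `g = x⁸ + a x⁴ + b x² + c x + d`,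
so it suffices to evaluate `∏_{j<k}(1 + r_j + r_k)` at these roots `0, θ₁, …, θ₈`. The root `0`
contributes `∏_k (1 + θ_k) = g(1)`. Since `g - d` is additive, `g(1 + x) = g(x) + (1 + a + b + c)`;
hence the square of `∏_{j<k}(1 + θ_j + θ_k)` is `∏_{j,k}(1 + θ_j + θ_k) = ∏_j g(1 + θ_j) =
(1 + a + b + c)⁸`, and Frobenius is injective.
-/

namespace Finset

variable {ι M : Type*} [LinearOrder ι] [Fintype ι] [CommMonoid M]

theorem prod_filter_lt_comp_perm {f : ι → ι → M} (hf : ∀ i j, f i j = f j i)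
    (σ : Equiv.Perm ι) :
    ∏ p ∈ univ.filter (fun p : ι × ι => p.1 < p.2), f (σ p.1) (σ p.2) =
      ∏ p ∈ univ.filter (fun p : ι × ι => p.1 < p.2), f p.1 p.2 := by
  refine prod_nbij' (fun p => (min (σ p.1) (σ p.2), max (σ p.1) (σ p.2)))
    (fun q => (min (σ.symm q.1) (σ.symm q.2), max (σ.symm q.1) (σ.symm q.2)))
    ?_ ?_ ?_ ?_ ?_
  · intro p hp
    simpa [min_lt_max] using (mem_filter.1 hp).2.ne'
  · intro q hq
    simpa [min_lt_max] using (mem_filter.1 hq).2.ne'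
  · intro p hp
    have hp := (mem_filter.1 hp).2
    rcases le_total (σ p.1) (σ p.2) with h | h <;> simp [h, hp.le]
  · intro q hq
    have hq := (mem_filter.1 hq).2
    rcases le_total (σ.symm q.1) (σ.symm q.2) with h | h <;> simp [h, hq.le]
  · intro p _
    rcases le_total (σ p.1) (σ p.2) with h | h <;> simp [h, hf]

theorem sq_prod_filter_lt {f : ι → ι → M} (hf : ∀ i j, f i j = f j i)
    (hdiag : ∀ i, f i i = 1) :
    (∏ p ∈ univ.filter (fun p : ι × ι => p.1 < p.2), f p.1 p.2) ^ 2 = ∏ i, ∏ j, f i j := by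
  have hsplit : ∀ p : ι × ι, f p.1 p.2 =
      (if p.1 < p.2 then f p.1 p.2 else 1) * (if p.2 < p.1 then f p.2 p.1 else 1) := by
    intro p
    rcases lt_trichotomy p.1 p.2 with h | h | h
    · simp [h, h.not_gt]
    · simp [h, hdiag]
    · simp [h, h.not_gt, hf]
  rw [← Fintype.prod_prod_type', Fintype.prod_congr _ _ hsplit, prod_mul_distrib,
    ← (Equiv.prodComm ι ι).prod_comp (fun p => if p.2 < p.1 then f p.2 p.1 else 1)]
  simp only [Equiv.prodComm_apply, Prod.fst_swap, Prod.snd_swap, sq, prod_filter]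
  congr

end Finset

theorem Fin.prod_filter_lt_cons {α M : Type*} [CommMonoid M] {n : ℕ} (f : α → α → M) (x : α)
    (θ : Fin n → α) :
    ∏ p ∈ univ.filter (fun p : Fin (n + 1) × Fin (n + 1) => p.1 < p.2),
        f ((Fin.cons x θ : Fin (n + 1) → α) p.1) ((Fin.cons x θ : Fin (n + 1) → α) p.2) =
      (∏ k, f x (θ k)) *
        ∏ p ∈ univ.filter (fun p : Fin n × Fin n => p.1 < p.2), f (θ p.1) (θ p.2) := by
  simp [prod_filter, Fintype.prod_prod_type, Fin.prod_univ_succ, Fin.succ_lt_succ_iff]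

namespace CharTwo

variable {K : Type*} [CommRing K] [CharP K 2]

theorem sq_prod_filter_lt_one_add_add {ι : Type*} [LinearOrder ι] [Fintype ι] (θ : ι → K)
    (A : K) (hA : ∀ x, ∏ j, (1 + x + θ j) = A + ∏ j, (x + θ j)) :
    (∏ p ∈ univ.filter (fun p : ι × ι => p.1 < p.2), (1 + θ p.1 + θ p.2)) ^ 2 =
      A ^ Fintype.card ι := by
  rw [sq_prod_filter_lt (f := fun i j => 1 + θ i + θ j) (fun i j => by ring)
    fun i => by rw [add_assoc, add_self_eq_zero, add_zero]]
  calc ∏ i, ∏ j, (1 + θ i + θ j) = ∏ _i : ι, A := by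
        refine prod_congr rfl fun i _ => ?_
        rw [hA, prod_eq_zero (mem_univ i) (add_self_eq_zero _), add_zero]
    _ = A ^ Fintype.card ι := by rw [prod_const, card_univ]

theorem prod_filter_lt_one_add_add_cons_zero [IsReduced K] (θ : Fin 8 → K) (a b c d : K)
    (hθ : ∀ x, ∏ j, (x + θ j) = x ^ 8 + a * x ^ 4 + b * x ^ 2 + c * x + d) :
    ∏ p ∈ univ.filter (fun p : Fin 9 × Fin 9 => p.1 < p.2),
        (1 + (Fin.cons 0 θ : Fin 9 → K) p.1 + (Fin.cons 0 θ : Fin 9 → K) p.2) =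
      (1 + a + b + c + d) * (1 + a + b + c) ^ 4 := by
  have hshift : ∀ x, ∏ j, (1 + x + θ j) = (1 + a + b + c) + ∏ j, (x + θ j) := fun x => by
    have hfrob : ∀ k : ℕ, (1 + x) ^ 2 ^ k = 1 + x ^ 2 ^ k := fun k => by
      rw [add_pow_char_pow, one_pow]
    rw [hθ, hθ]
    linear_combination hfrob 3 + a * hfrob 2 + b * hfrob 1
  have hpairs : ∏ p ∈ univ.filter (fun p : Fin 8 × Fin 8 => p.1 < p.2), (1 + θ p.1 + θ p.2) =
      (1 + a + b + c) ^ 4 := by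
    apply frobenius_inj K 2
    rw [frobenius_def, frobenius_def, sq_prod_filter_lt_one_add_add θ _ hshift, Fintype.card_fin,
      ← pow_mul]
  rw [Fin.prod_filter_lt_cons (fun u v : K => 1 + u + v), hpairs]
  congr 1
  simpa using hθ 1

end CharTwo

theorem Multiset.exists_univ_val_map_eq {α : Type*} {n : ℕ} (s : Multiset α)
    (hs : Multiset.card s = n) : ∃ r : Fin n → α, univ.val.map r = s := by
  obtain ⟨l, rfl⟩ : ∃ l : List α, ↑l = s := ⟨s.toList, s.coe_toList⟩
  rw [Multiset.coe_card] at hs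
  subst hs
  exact ⟨l.get, by rw [Fin.univ_val_map, List.ofFn_get]⟩

namespace Polynomial

theorem _root_.IsAlgClosed.exists_esymm_eq {K : Type*} [Field K] [IsAlgClosed K] {n : ℕ}
    (v : Fin n → K) : ∃ r : Fin n → K, ∀ i : Fin n, (univ.val.map r).esymm (i + 1) = v i := by
  set p : K[X] := X ^ n + ∑ i : Fin n, C (v i.rev) * X ^ (i : ℕ)
  have hmonic : p.Monic := monic_X_pow_add (degree_sum_fin_lt _)
  have hdeg : p.natDegree = n := by
    rw [natDegree_add_eq_left_of_degree_lt (by rw [degree_X_pow]; exact degree_sum_fin_lt _),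
      natDegree_X_pow]
  have hroots : Multiset.card p.roots = p.natDegree :=
    splits_iff_card_roots.mp (IsAlgClosed.splits p)
  obtain ⟨r, hr⟩ := Multiset.exists_univ_val_map_eq (p.roots.map Neg.neg)
    (by rw [Multiset.card_map, hroots, hdeg])
  refine ⟨r, fun i => ?_⟩
  have hprod : ((univ.val.map r).map fun a => X + C a).prod = p := by
    rw [hr, Multiset.map_map]
    convert prod_multiset_X_sub_C_of_monic_of_roots_card_eq hmonic hroots using 3
    ext a
    simp [sub_eq_add_neg]
  have hcard : Multiset.card (univ.val.map r) = n := by simp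
  have hcoeff := Multiset.prod_X_add_C_coeff (univ.val.map r) (k := i.rev) (by rw [hcard]; omega)
  have hidx : n - (i.rev : ℕ) = i + 1 := by rw [Fin.val_rev]; omega
  rw [hprod, hcard, hidx] at hcoeff
  rw [← hcoeff]
  simp only [p, coeff_add, coeff_X_pow, if_neg i.rev.isLt.ne, zero_add, finsetSum_coeff,
    coeff_C_mul_X_pow, Fin.val_inj, sum_ite_eq, mem_univ, if_true, Fin.rev_rev]

theorem prod_filter_lt_one_add_add_of_prod_X_add_C {K : Type*} [Field K] [CharP K 2]
    (r : Fin 9 → K) (a b c d : K)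
    (hr : ∏ i, (X + C (r i)) = X ^ 9 + C a * X ^ 5 + C b * X ^ 3 + C c * X ^ 2 + C d * X) :
    ∏ p ∈ univ.filter (fun p : Fin 9 × Fin 9 => p.1 < p.2), (1 + r p.1 + r p.2) =
      (1 + a + b + c + d) * (1 + a + b + c) ^ 4 := by
  obtain ⟨i, -, hi⟩ : ∃ i ∈ univ, r i = 0 := by
    simpa [eval_prod, prod_eq_zero_iff] using congrArg (eval 0) hr
  set ρ := r ∘ Equiv.swap 0 i
  have hρ : ρ = Fin.cons 0 (Fin.tail ρ) := by
    conv_lhs => rw [← Fin.cons_self_tail ρ]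
    simp [ρ, hi]
  have hθ : ∏ j, (X + C (Fin.tail ρ j)) = X ^ 8 + C a * X ^ 4 + C b * X ^ 2 + C c * X + C d := by
    apply mul_left_cancel₀ X_ne_zero
    calc X * ∏ j, (X + C (Fin.tail ρ j)) = ∏ j, (X + C (ρ j)) := by
          conv_rhs => rw [hρ]
          simp [Fin.prod_univ_succ]
      _ = ∏ j, (X + C (r j)) := Equiv.prod_comp (Equiv.swap 0 i) fun j => X + C (r j)
      _ = _ := by rw [hr]; ring
  refine (prod_filter_lt_comp_perm (f := fun u v => 1 + r u + r v) (fun u v => by ring)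
    (Equiv.swap 0 i)).symm.trans ?_
  change ∏ p ∈ univ.filter (fun p : Fin 9 × Fin 9 => p.1 < p.2), (1 + ρ p.1 + ρ p.2) = _
  rw [hρ]
  exact CharTwo.prod_filter_lt_one_add_add_cons_zero _ a b c d fun x => by
    simpa [eval_prod] using congrArg (eval x) hθ

theorem prod_filter_lt_one_add_add_of_esymm {K : Type*} [Field K] [CharP K 2] (r : Fin 9 → K)
    (h1 : (univ.val.map r).esymm 1 = 0) (h2 : (univ.val.map r).esymm 2 = 0)
    (h3 : (univ.val.map r).esymm 3 = 0) (h5 : (univ.val.map r).esymm 5 = 0)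
    (h9 : (univ.val.map r).esymm 9 = 0) :
    ∏ p ∈ univ.filter (fun p : Fin 9 × Fin 9 => p.1 < p.2), (1 + r p.1 + r p.2) =
      (1 + (univ.val.map r).esymm 4 + (univ.val.map r).esymm 6 + (univ.val.map r).esymm 7 +
          (univ.val.map r).esymm 8) *
        (1 + (univ.val.map r).esymm 4 + (univ.val.map r).esymm 6 +
          (univ.val.map r).esymm 7) ^ 4 := by
  apply prod_filter_lt_one_add_add_of_prod_X_add_C
  have hvieta := Multiset.prod_X_add_C_eq_sum_esymm (univ.val.map r)
  rw [Multiset.map_map] at hvieta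
  refine (prod_eq_multiset_prod _ _).trans (hvieta.trans ?_)
  have h0 : (univ.val.map r).esymm 0 = 1 := by simp [Multiset.esymm]
  simp only [Multiset.card_map, card_val, card_univ, Fintype.card_fin, sum_range_succ,
    range_zero, sum_empty, h0, h1, h2, h3, h5, h9, C_0, C_1, zero_mul]
  ring

end Polynomial

namespace MvPolynomial

theorem aeval_sub_aeval_mem {R A σ : Type*} [CommSemiring R] [CommRing A] [Algebra R A]
    {I : Ideal A} {f g : σ → A} (h : ∀ i, f i - g i ∈ I) (p : MvPolynomial σ R) :
    aeval f p - aeval g p ∈ I := by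
  rw [← Ideal.Quotient.eq]
  have hcomp : (Ideal.Quotient.mkₐ R I).comp (aeval f) =
      (Ideal.Quotient.mkₐ R I).comp (aeval g) :=
    algHom_ext fun i => by simpa using Ideal.Quotient.eq.mpr (h i)
  exact AlgHom.congr_fun hcomp p

theorem IsSymmetric.mem_span_esymm {F K : Type*} [Field F] [Field K] [IsAlgClosed K]
    [Algebra F K] {n : ℕ} {P : MvPolynomial (Fin n) F} (hP : P.IsSymmetric) (S : Set (Fin n))
    (h : ∀ r : Fin n → K, (∀ i ∈ S, (univ.val.map r).esymm (i + 1) = 0) → aeval r P = 0) :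
    P ∈ Ideal.span ((fun i : Fin n => esymm (Fin n) F (i + 1)) '' S) := by
  classical
  set E : Fin n → MvPolynomial (Fin n) F := fun i => esymm (Fin n) F (i + 1)
  obtain ⟨G, hG⟩ := esymmAlgHom_surjective F (Fintype.card_fin n).le ⟨P, hP⟩
  replace hG : aeval E G = P := by simpa [esymmAlgHom_apply] using congrArg Subtype.val hG
  set kill : Fin n → MvPolynomial (Fin n) F := fun i => if i ∈ S then 0 else X i
  have hkill : aeval kill G = 0 := by
    apply MvPolynomial.map_injective (algebraMap F K) (algebraMap F K).injective
    rw [map_zero]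
    refine MvPolynomial.funext fun w => ?_
    obtain ⟨r, hr⟩ := IsAlgClosed.exists_esymm_eq fun i => if i ∈ S then 0 else w i
    calc eval w (MvPolynomial.map (algebraMap F K) (aeval kill G))
        = aeval (fun i => aeval r (E i)) G := by
          rw [eval_map, ← aeval_def, comp_aeval_apply]
          congr 2 with i
          simp only [E, kill, aeval_esymm_eq_multiset_esymm, hr]
          split_ifs <;> simp
      _ = aeval r P := by rw [← hG, comp_aeval_apply]
      _ = eval w (MvPolynomial.map (algebraMap F K) 0) := by
          rw [h r fun i hi => (hr i).trans (if_pos hi), map_zero, map_zero]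
  have hsub := aeval_sub_aeval_mem (I := Ideal.span (E '' S)) (f := E)
    (g := fun i => aeval E (kill i)) (fun i => by
      by_cases hi : i ∈ S
      · simpa [kill, hi] using Ideal.subset_span (Set.mem_image_of_mem E hi)
      · simp [kill, hi]) G
  rwa [hG, ← comp_aeval_apply, hkill, map_zero, sub_zero] at hsub

end MvPolynomial

/-- in `𝔽₂[t₁,…,t₉]`, `∏_{1≤j<k≤9} (1 + t_j + t_k)` is congruent
to `(1 + e₄ + e₆ + e₇ + e₈)·(1 + e₄ + e₆ + e₇)⁴` modulo the ideal
`(e₁, e₂, e₃, e₅, e₉)`. -/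
theorem lambda2_spin9 :
    (∏ p ∈ univ.filter (fun p : Fin 9 × Fin 9 => p.1 < p.2),
        (1 + X p.1 + X p.2) : MvPolynomial (Fin 9) (ZMod 2))
      - (1 + e 4 + e 6 + e 7 + e 8) * (1 + e 4 + e 6 + e 7) ^ 4
      ∈ Ideal.span {e 1, e 2, e 3, e 5, e 9} := by
  have hideal : Ideal.span {e 1, e 2, e 3, e 5, e 9} =
      Ideal.span ((fun i : Fin 9 => esymm (Fin 9) (ZMod 2) (i + 1)) '' {0, 1, 2, 4, 8}) := by
    simp [Set.image_insert_eq, e]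
  rw [hideal]
  refine IsSymmetric.mem_span_esymm (K := AlgebraicClosure (ZMod 2))
    (.sub (fun σ => ?_) (fun σ => ?_)) _ fun r hr => ?_
  · simpa [map_prod] using prod_filter_lt_comp_perm
      (f := fun u v => (1 + X u + X v : MvPolynomial (Fin 9) (ZMod 2))) (fun u v => by ring) σ
  · simp [e, rename_esymm]
  · rw [map_sub, sub_eq_zero]
    simp only [map_prod, map_add, map_one, map_mul, map_pow, aeval_X, e,
      aeval_esymm_eq_multiset_esymm]
    exact Polynomial.prod_filter_lt_one_add_add_of_esymm r (hr 0 (by simp)) (hr 1 (by simp))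
      (hr 2 (by simp)) (hr 4 (by simp)) (hr 8 (by simp))
end
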